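/- D(A) = {u ∈ D* : Γ₁u = 0 and Γ₂u = 0}, and for every u in this set Ã*u = Au, i.e. Ã*u = (x ↦ x u(x)) + ⟨u, φ⟩ψ; thus A is the restriction of Ã* to ker Γ₁ ∩ ker Γ₂. Moreover, the modified Green formula holds: for all f, g ∈ D*, ⟨A*f, g⟩ − ⟨f, Ã*g⟩ = Γ₁f·conj(Γ₂g) − Γ₂f·conj(Γ₁g). -/

import Mathlib

open MeasureTheory Filter

/-- The (paper-convention) `L²(ℝ)` inner product `⟨f,g⟩ = ∫ f · conj g`,
linear in the first argument. -/
noncomputable def ip (f g : ℝ → ℂ) : ℂ :=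
  ∫ x : ℝ, f x * (starRingEnd ℂ) (g x)

/-- The boundary operator `Γ₁`, evaluated on `g ∈ D*` with associated constant `c = c_g`:
`Γ₁ g = ∫_ℝ ( g(x) − c·sign(x)·(x²+1)^{−1/2} ) dx`. -/
noncomputable def Gam1 (g : ℝ → ℂ) (c : ℂ) : ℂ :=
  ∫ x : ℝ, (g x - c * ((Real.sign x : ℝ) : ℂ) * (((Real.sqrt (x ^ 2 + 1) : ℝ) : ℂ))⁻¹)

/-!
For `g ∈ D*` the function `g − c_g · sign(x)/√(x²+1)` is integrable: multiplied by `√(x²+1)` it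
becomes `(√(x²+1) − |x|) g + sign(x) (x g − c_g)`, a sum of two `L²` functions, and
`1/√(x²+1)` is itself in `L²`. Green's formula then reduces to the pointwise identity
`(x f − c_f) ḡ − f (x g − c_g)‾ = c̄_g (f − c_f s) − c_f (g − c_g s)‾` for the real weight
`s = sign(x)/√(x²+1)`, integrated; the rank-one parts of `A*` and `Ã*` contribute
`⟨f,ψ⟩⟨φ,g⟩` to both inner products and cancel.
-/

namespace Real

lemma measurable_sign : Measurable Real.sign :=
  Measurable.ite measurableSet_Iio measurable_const
    (Measurable.ite measurableSet_Ioi measurable_const measurable_const)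

lemma sign_mul_self_eq_abs (x : ℝ) : Real.sign x * x = |x| := by
  rcases lt_trichotomy x 0 with h | rfl | h
  · rw [sign_of_neg h, abs_of_neg h, neg_one_mul]
  · simp
  · rw [sign_of_pos h, abs_of_pos h, one_mul]

lemma abs_sign_le_one (x : ℝ) : |Real.sign x| ≤ 1 := by
  rcases sign_apply_eq x with h | h | h <;> simp [h]

lemma abs_sqrt_sq_add_one_sub_abs_le_one (x : ℝ) : |(√(x ^ 2 + 1) - |x|)| ≤ 1 := by
  have h_lower : |x| ≤ √(x ^ 2 + 1) := by
    rw [← sqrt_sq_eq_abs]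
    exact sqrt_le_sqrt (by linarith)
  have h_upper : √(x ^ 2 + 1) ≤ |x| + 1 := by
    rw [sqrt_le_left (by positivity), ← sq_abs]
    nlinarith [abs_nonneg x]
  exact abs_le.2 ⟨by linarith, by linarith⟩

end Real

section Lp

variable {α : Type*} [MeasurableSpace α] {μ : Measure α}

lemma MeasureTheory.MemLp.ofReal_mul_of_abs_le_one {p : ENNReal} {f : α → ℂ} {u : α → ℝ}
    (hf : MemLp f p μ) (hu : Measurable u) (hu_le : ∀ x, |u x| ≤ 1) :
    MemLp (fun x => (u x : ℂ) * f x) p μ := by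
  refine hf.of_le ((Complex.measurable_ofReal.comp hu).aestronglyMeasurable.mul hf.1) ?_
  filter_upwards with x
  rw [norm_mul, Complex.norm_real, Real.norm_eq_abs]
  exact mul_le_of_le_one_left (norm_nonneg _) (hu_le x)

lemma integrable_mul_conj_of_memLp_two {𝕜 : Type*} [RCLike 𝕜] {f g : α → 𝕜}
    (hf : MemLp f 2 μ) (hg : MemLp g 2 μ) :
    Integrable (fun x => f x * starRingEnd 𝕜 (g x)) μ :=
  hf.integrable_mul (p := 2) (q := 2) hg.star

lemma MeasureTheory.Integrable.conj {𝕜 : Type*} [RCLike 𝕜] {f : α → 𝕜} (hf : Integrable f μ) :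
    Integrable (fun x => starRingEnd 𝕜 (f x)) μ :=
  memLp_one_iff_integrable.1 (memLp_one_iff_integrable.2 hf).star

lemma eq_zero_of_memLp_of_memLp_sub_const {E : Type*} [NormedAddCommGroup E] {p : ENNReal}
    (hp_ne_zero : p ≠ 0) (hp_ne_top : p ≠ ⊤) (hμ : μ Set.univ = ⊤) {F : α → E} {c : E}
    (hF : MemLp F p μ) (hFc : MemLp (fun x => F x - c) p μ) : c = 0 := by
  have hc : MemLp (fun _ : α => c) p μ := by
    convert hF.sub hFc using 1
    ext x
    simp
  simpa [hμ] using (memLp_const_iff hp_ne_zero hp_ne_top).1 hc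

end Lp

lemma tendsto_intervalIntegral_neg_self_iff {E : Type*} [NormedAddCommGroup E]
    [NormedSpace ℝ E] [CompleteSpace E] {f : ℝ → E} (hf : Integrable f) {a : E} :
    Tendsto (fun R : ℝ => ∫ x in (-R)..R, f x) atTop (nhds a) ↔ ∫ x, f x = a := by
  have h_lim := intervalIntegral_tendsto_integral hf tendsto_neg_atTop_atBot tendsto_id
  exact ⟨fun h => tendsto_nhds_unique h_lim h, fun h => h ▸ h_lim⟩

noncomputable def signWeight (x : ℝ) : ℝ := Real.sign x / √(x ^ 2 + 1)

lemma Gam1_eq_integral (g : ℝ → ℂ) (c : ℂ) : Gam1 g c = ∫ x, g x - c * signWeight x := by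
  unfold Gam1 signWeight
  congr 1 with x
  push_cast
  ring

lemma Gam1_zero (g : ℝ → ℂ) : Gam1 g 0 = ∫ x, g x := by
  simp [Gam1]

lemma memLp_two_inv_sqrt_sq_add_one : MemLp (fun x : ℝ => (√(x ^ 2 + 1))⁻¹) 2 volume := by
  rw [memLp_two_iff_integrable_sq (by fun_prop)]
  refine integrable_inv_one_add_sq.congr (ae_of_all _ fun x => ?_)
  simp only [inv_pow, Real.sq_sqrt (by positivity : (0 : ℝ) ≤ x ^ 2 + 1), add_comm]

lemma integrable_sub_const_mul_signWeight {f : ℝ → ℂ} {c : ℂ} (hf : MemLp f 2 volume)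
    (hF : MemLp (fun x : ℝ => (x : ℂ) * f x - c) 2 volume) :
    Integrable (fun x => f x - c * signWeight x) := by
  have h_sum : MemLp (fun x : ℝ => ((√(x ^ 2 + 1) - |x| : ℝ) : ℂ) * f x
      + (Real.sign x : ℂ) * ((x : ℂ) * f x - c)) 2 volume :=
    (hf.ofReal_mul_of_abs_le_one (by fun_prop) Real.abs_sqrt_sq_add_one_sub_abs_le_one).add
      (hF.ofReal_mul_of_abs_le_one Real.measurable_sign Real.abs_sign_le_one)
  refine (memLp_two_inv_sqrt_sq_add_one.ofReal.integrable_mul h_sum).congr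
    (ae_of_all _ fun x => ?_)
  have h_sqrt : (√(x ^ 2 + 1) : ℂ) ≠ 0 := by
    exact_mod_cast (Real.sqrt_pos.2 (by positivity : (0 : ℝ) < x ^ 2 + 1)).ne'
  have h_abs : ((|x| : ℝ) : ℂ) = Real.sign x * x := by
    exact_mod_cast (Real.sign_mul_self_eq_abs x).symm
  simp only [Pi.mul_apply, signWeight, RCLike.ofReal_eq_complex_ofReal]
  push_cast
  rw [h_abs]
  field_simp
  ring

lemma integrable_of_memLp_two_of_memLp_two_mul {f : ℝ → ℂ} (hf : MemLp f 2 volume)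
    (hxf : MemLp (fun x : ℝ => (x : ℂ) * f x) 2 volume) : Integrable f := by
  simpa using integrable_sub_const_mul_signWeight (c := 0) hf (by simpa using hxf)

lemma conj_ip (f g : ℝ → ℂ) : starRingEnd ℂ (ip f g) = ip g f := by
  unfold ip
  rw [← integral_conj]
  congr 1 with x
  rw [map_mul, Complex.conj_conj, mul_comm]

lemma ip_add_const_mul_left {F φ g : ℝ → ℂ} (hF : Integrable fun x => F x * starRingEnd ℂ (g x))
    (hφ : Integrable fun x => φ x * starRingEnd ℂ (g x)) (a : ℂ) :
    ip (fun x => F x + a * φ x) g = ip F g + a * ip φ g := by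
  unfold ip
  simp only [add_mul, mul_assoc]
  rw [integral_add hF (hφ.const_mul a), integral_const_mul]

lemma ip_add_const_mul_right {f G ψ : ℝ → ℂ} (hG : Integrable fun x => f x * starRingEnd ℂ (G x))
    (hψ : Integrable fun x => f x * starRingEnd ℂ (ψ x)) (b : ℂ) :
    ip f (fun x => G x + b * ψ x) = ip f G + starRingEnd ℂ b * ip f ψ := by
  unfold ip
  simp only [map_add, map_mul, mul_add, mul_left_comm (f _)]
  rw [integral_add hG (hψ.const_mul _), integral_const_mul]

lemma ip_add_rankOne_sub_ip_add_rankOne {f g F G φ ψ : ℝ → ℂ} (hf : MemLp f 2 volume)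
    (hg : MemLp g 2 volume) (hF : MemLp F 2 volume) (hG : MemLp G 2 volume)
    (hφ : MemLp φ 2 volume) (hψ : MemLp ψ 2 volume) :
    ip (fun x => F x + ip f ψ * φ x) g - ip f (fun x => G x + ip g φ * ψ x) =
      ip F g - ip f G := by
  rw [ip_add_const_mul_left (integrable_mul_conj_of_memLp_two hF hg)
      (integrable_mul_conj_of_memLp_two hφ hg),
    ip_add_const_mul_right (integrable_mul_conj_of_memLp_two hf hG)
      (integrable_mul_conj_of_memLp_two hf hψ), conj_ip]
  ring

lemma ip_mul_sub_sub_ip_mul_sub {f g : ℝ → ℂ} {cf cg : ℂ} (hf : MemLp f 2 volume)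
    (hF : MemLp (fun x : ℝ => (x : ℂ) * f x - cf) 2 volume) (hg : MemLp g 2 volume)
    (hG : MemLp (fun x : ℝ => (x : ℂ) * g x - cg) 2 volume) :
    ip (fun x : ℝ => (x : ℂ) * f x - cf) g - ip f (fun x : ℝ => (x : ℂ) * g x - cg) =
      Gam1 f cf * starRingEnd ℂ cg - cf * starRingEnd ℂ (Gam1 g cg) := by
  have h_f := integrable_sub_const_mul_signWeight hf hF
  have h_g := (integrable_sub_const_mul_signWeight hg hG).conj
  calc ip (fun x : ℝ => (x : ℂ) * f x - cf) g - ip f (fun x : ℝ => (x : ℂ) * g x - cg)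
      = ∫ x : ℝ, (((x : ℂ) * f x - cf) * starRingEnd ℂ (g x)
          - f x * starRingEnd ℂ ((x : ℂ) * g x - cg)) :=
        (integral_sub (integrable_mul_conj_of_memLp_two hF hg)
          (integrable_mul_conj_of_memLp_two hf hG)).symm
    _ = ∫ x : ℝ, (starRingEnd ℂ cg * (f x - cf * signWeight x)
          - cf * starRingEnd ℂ (g x - cg * signWeight x)) := by
        congr 1 with x
        simp only [map_sub, map_mul, Complex.conj_ofReal]
        ring
    _ = starRingEnd ℂ cg * Gam1 f cf - cf * starRingEnd ℂ (Gam1 g cg) := by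
        rw [integral_sub (h_f.const_mul _) (h_g.const_mul _), integral_const_mul,
          integral_const_mul, integral_conj, Gam1_eq_integral, Gam1_eq_integral]
    _ = Gam1 f cf * starRingEnd ℂ cg - cf * starRingEnd ℂ (Gam1 g cg) := by ring

theorem stmt17 (φ ψ : ℝ → ℂ)
    (hφ : MemLp φ 2 (volume : Measure ℝ)) (hψ : MemLp ψ 2 (volume : Measure ℝ)) :
    -- `D(A) = {u ∈ D* : Γ₁ u = 0 ∧ Γ₂ u = 0}`
    ({f : Lp ℂ 2 (volume : Measure ℝ) |
        MemLp (fun x : ℝ => (x : ℂ) * f x) 2 (volume : Measure ℝ) ∧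
        Tendsto (fun R : ℝ => ∫ x in (-R)..R, f x) atTop (nhds 0)} =
      {f : Lp ℂ 2 (volume : Measure ℝ) | ∃ c : ℂ,
        MemLp (fun x : ℝ => (x : ℂ) * f x - c) 2 (volume : Measure ℝ) ∧
        Gam1 (⇑f) c = 0 ∧ c = 0}) ∧
    -- on this set, `Ã* u = A u = (x ↦ x u(x)) + ⟨u,φ⟩ ψ`
    (∀ f : Lp ℂ 2 (volume : Measure ℝ),
      MemLp (fun x : ℝ => (x : ℂ) * f x) 2 (volume : Measure ℝ) →
      Tendsto (fun R : ℝ => ∫ x in (-R)..R, f x) atTop (nhds 0) →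
      ∀ c : ℂ, MemLp (fun x : ℝ => (x : ℂ) * f x - c) 2 (volume : Measure ℝ) →
        (fun x : ℝ => ((x : ℂ) * f x - c) + ip (⇑f) φ * ψ x) =
          fun x : ℝ => (x : ℂ) * f x + ip (⇑f) φ * ψ x) ∧
    -- modified Green formula: `⟨A*f, g⟩ − ⟨f, Ã*g⟩ = Γ₁f·conj(Γ₂g) − Γ₂f·conj(Γ₁g)`
    (∀ (f g : ℝ → ℂ) (cf cg : ℂ),
      MemLp f 2 (volume : Measure ℝ) →
      MemLp (fun x : ℝ => (x : ℂ) * f x - cf) 2 (volume : Measure ℝ) →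
      MemLp g 2 (volume : Measure ℝ) →
      MemLp (fun x : ℝ => (x : ℂ) * g x - cg) 2 (volume : Measure ℝ) →
        ip (fun x : ℝ => ((x : ℂ) * f x - cf) + ip f ψ * φ x) g -
            ip f (fun x : ℝ => ((x : ℂ) * g x - cg) + ip g φ * ψ x) =
          Gam1 f cf * (starRingEnd ℂ) cg - cf * (starRingEnd ℂ) (Gam1 g cg)) := by
  refine ⟨?_, ?_, ?_⟩
  · ext f
    constructor
    · rintro ⟨hxf, h_lim⟩
      have h_int := integrable_of_memLp_two_of_memLp_two_mul (Lp.memLp f) hxf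
      exact ⟨0, by simpa using hxf,
        (Gam1_zero f).trans ((tendsto_intervalIntegral_neg_self_iff h_int).1 h_lim), rfl⟩
    · rintro ⟨c, hxf, h_Gam1, rfl⟩
      simp only [sub_zero] at hxf
      rw [Gam1_zero] at h_Gam1
      exact ⟨hxf, (tendsto_intervalIntegral_neg_self_iff
        (integrable_of_memLp_two_of_memLp_two_mul (Lp.memLp f) hxf)).2 h_Gam1⟩
  · intro f hxf _ c hc
    obtain rfl : c = 0 :=
      eq_zero_of_memLp_of_memLp_sub_const two_ne_zero ENNReal.ofNat_ne_top Real.volume_univ hxf hc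
    simp only [sub_zero]
  · intro f g cf cg hf hF hg hG
    rw [ip_add_rankOne_sub_ip_add_rankOne hf hg hF hG hφ hψ]
    exact ip_mul_sub_sub_ip_mul_sub hf hF hg hG
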